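/- arXiv:1609.04542 — 7 statements merged into one kernel-verified Lean document; each statement's English description precedes it below -/
import Mathlib

section
/- Let w ∈ S_n be a permutation that avoids both the pattern 321 and the pattern 3412. If k = w(1), then for all i with 2 ≤ i ≤ k−1, we have w(i) = i−1. -/
/-- `w` avoids the pattern 321: no indices `i < j < k` with `w i > w j > w k`. -/
def Avoids321 {n : ℕ} (w : Equiv.Perm (Fin n)) : Prop :=
  ¬ ∃ i j k : Fin n, i < j ∧ j < k ∧ w k < w j ∧ w j < w i

/-- `w` avoids the pattern 3412: no indices `i₁ < i₂ < i₃ < i₄` with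
`w i₃ < w i₄ < w i₁ < w i₂`. -/
def Avoids3412 {n : ℕ} (w : Equiv.Perm (Fin n)) : Prop :=
  ¬ ∃ i j k l : Fin n, i < j ∧ j < k ∧ k < l ∧ w k < w l ∧ w l < w i ∧ w i < w j

/-!
Strong induction on `i`. The positions `1, …, i - 1` carry the values `0, …, i - 2`, so
`w i ≥ i - 1`, and if `w i ≠ i - 1` then the value `i - 1` sits at a position `p > i`.
If `w i < w 0`, the positions `0 < i < p` form a 321. If `w i > w 0`, the value `i` sits at a
position `q > i`; then `i < q < p` form a 321, or `0 < i < p < q` form a 3412.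
-/

namespace Equiv.Perm

variable {n : ℕ} {w : Perm (Fin n)} {i : Fin n}

theorem le_of_le_apply_add_one (hw : ∀ j < i, 1 ≤ (j : ℕ) → (w j : ℕ) + 1 = j) {p : Fin n}
    (hp : (p : ℕ) ≠ 0) (h : (i : ℕ) ≤ w p + 1) : i ≤ p := by
  by_contra! hpi
  have := hw p hpi (Nat.one_le_iff_ne_zero.2 hp)
  omega

theorem le_apply_add_one (hw : ∀ j < i, 1 ≤ (j : ℕ) → (w j : ℕ) + 1 = j) : (i : ℕ) ≤ w i + 1 := by
  by_contra! hlt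
  let j : Fin n := ⟨w i + 1, by omega⟩
  have hwj : (w j : ℕ) + 1 = j := hw j hlt (by simp [j])
  have := congrArg Fin.val (w.injective (Fin.ext (by simp [j] at hwj; omega) : w j = w i))
  simp [j] at this
  omega

end Equiv.Perm

theorem Avoids321.apply_add_one_eq_of_forall_lt {n : ℕ} {w : Equiv.Perm (Fin n)}
    (h321 : Avoids321 w) (h3412 : Avoids3412 w) (hn : 0 < n) {i : Fin n} (hi1 : 1 ≤ (i : ℕ))
    (hi2 : (i : ℕ) + 1 ≤ (w ⟨0, hn⟩ : ℕ)) (hw : ∀ j < i, 1 ≤ (j : ℕ) → (w j : ℕ) + 1 = j) :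
    (w i : ℕ) + 1 = i := by
  set z : Fin n := ⟨0, hn⟩
  have hz_lt : z < i := Fin.lt_def.2 (by simp [z]; omega)
  have hi_le := w.le_apply_add_one hw
  by_contra hne
  let p := w.symm ⟨i - 1, by omega⟩
  have hwp : (w p : ℕ) = i - 1 := by simp [p]
  have hip : i < p := by
    have hp : (p : ℕ) ≠ 0 := fun h => by rw [show p = z from Fin.ext h] at hwp; omega
    exact lt_of_le_of_ne (w.le_of_le_apply_add_one hw hp (by omega))
      fun h => by rw [← h] at hwp; omega
  rcases lt_or_gt_of_ne (w.injective.ne (ne_of_gt hz_lt)) with hlt | hgt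
  · exact h321 ⟨z, i, p, hz_lt, hip, Fin.lt_def.2 (by omega), hlt⟩
  let q := w.symm ⟨i, i.isLt⟩
  have hwq : (w q : ℕ) = i := by simp [q]
  have hiq : i < q := by
    have hq : (q : ℕ) ≠ 0 := fun h => by rw [show q = z from Fin.ext h] at hwq; omega
    exact lt_of_le_of_ne (w.le_of_le_apply_add_one hw hq (by omega))
      fun h => by rw [← h] at hwq; omega
  rcases lt_or_gt_of_ne (show q ≠ p from fun h => by rw [h] at hwq; omega) with hqp | hpq
  · exact h321 ⟨i, q, p, hiq, hqp, Fin.lt_def.2 (by omega), Fin.lt_def.2 (by omega)⟩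
  · exact h3412 ⟨z, i, p, q, hz_lt, hip, hpq, Fin.lt_def.2 (by omega), Fin.lt_def.2 (by omega), hgt⟩

/-- Zero-based: the paper's `k = w(1)` is `w 0`, and its range `2 ≤ i ≤ k - 1` becomes
`1 ≤ i`, `i + 1 ≤ w 0`. -/
theorem stmt0 {n : ℕ} (hn : 0 < n) (w : Equiv.Perm (Fin n))
    (h321 : Avoids321 w) (h3412 : Avoids3412 w)
    (i : Fin n) (hi1 : 1 ≤ (i : ℕ)) (hi2 : (i : ℕ) + 1 ≤ (w ⟨0, hn⟩ : ℕ)) :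
    (w i : ℕ) + 1 = (i : ℕ) := by
  induction i using WellFoundedLT.induction with
  | _ i ih =>
    exact h321.apply_add_one_eq_of_forall_lt h3412 hn hi1 hi2
      fun j hji hj1 => ih j hji hj1 (by omega)
end

section
/- Let X be a finite multiset of nonempty integer intervals (segments) [a,b] with a ≤ b. Define a partial order ⪯' on segments by [a,b] ⪯' [c,d] iff (a < c and b < d) or [a,b]=[c,d]. Then the minimal number of chains (with respect to ⪯') needed to partition X equals the maximal size of a family of segments Δ_1 ⊆ Δ_2 ⊆ ... ⊆ Δ_k in X (counted with multiplicity), where ⊆ denotes interval containment. -/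
/-!
Two segments are incomparable under `⪯'` exactly when one contains the other, so a partition
into ladders is a colouring whose colour classes are antichains for containment, and the
theorem is Mirsky's theorem (the dual of Dilworth's) for containment, made a strict order on
indices by breaking ties between equal segments by index. A chain meets every colour class at
most once; conversely, colouring `i` by the size of a longest chain strictly below it uses fewer
colours than the longest chain has elements, and no two comparable elements get the same colour
because this height is strictly monotone.
-/

/-- A segment `[a,b]` of integers with `a ≤ b`. -/
structure Seg where
  a : ℤ
  b : ℤ
  le : a ≤ b

/-- The strict part of the relation `⪯'`: `[a,b] ≺' [c,d]` iff `a < c` and `b < d`. -/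
def SegLt (Δ Δ' : Seg) : Prop := Δ.a < Δ'.a ∧ Δ.b < Δ'.b

/-- Containment of segments: `[a,b] ⊆ [c,d]` iff `c ≤ a` and `b ≤ d`. -/
def SegSub (Δ Δ' : Seg) : Prop := Δ'.a ≤ Δ.a ∧ Δ.b ≤ Δ'.b

lemma card_le_of_isChain {ι : Type*} {r : ι → ι → Prop} {k : ℕ} {c : ι → Fin k}
    (hc : ∀ i j, c i = c j → i ≠ j → ¬ r i j) {S : Finset ι} (hS : IsChain r (S : Set ι)) :
    S.card ≤ k := by
  have hinj : Set.InjOn c S := fun i hi j hj hij => by_contra fun hne =>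
    (hS hi hj hne).elim (hc i j hij hne) (hc j i hij.symm (Ne.symm hne))
  simpa using Finset.card_le_card_of_injOn c (fun _ _ => Finset.mem_univ _) hinj

section Mirsky

variable {ι : Type*} [Fintype ι] (r : ι → ι → Prop)

lemma bddAbove_setOf_card (P : Finset ι → Prop) :
    BddAbove {k | ∃ S : Finset ι, S.card = k ∧ P S} :=
  ⟨Fintype.card ι, by rintro _ ⟨S, rfl, -⟩; exact S.card_le_univ⟩

noncomputable def maxChainCard : ℕ :=
  sSup {k | ∃ S : Finset ι, S.card = k ∧ IsChain r (S : Set ι)}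

noncomputable def chainHeight (i : ι) : ℕ :=
  sSup {k | ∃ S : Finset ι, S.card = k ∧ IsChain r (S : Set ι) ∧ ∀ j ∈ S, r j i}

lemma exists_chain_card_eq_chainHeight (i : ι) :
    ∃ S : Finset ι, S.card = chainHeight r i ∧ IsChain r (S : Set ι) ∧ ∀ j ∈ S, r j i := by
  have hne : {k | ∃ S : Finset ι, S.card = k ∧ IsChain r (S : Set ι) ∧ ∀ j ∈ S, r j i}.Nonempty :=
    ⟨0, ∅, rfl, by simp, by simp⟩
  exact Nat.sSup_mem hne (bddAbove_setOf_card _)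

variable {r} [IsStrictOrder ι r]

lemma exists_chain_card_eq_chainHeight_add_one (i : ι) :
    ∃ T : Finset ι, T.card = chainHeight r i + 1 ∧ IsChain r (T : Set ι) ∧
      ∀ j ∈ T, j = i ∨ r j i := by
  classical
  obtain ⟨S, hcard, hS, hbelow⟩ := exists_chain_card_eq_chainHeight r i
  refine ⟨insert i S, ?_, ?_, fun j hj => (Finset.mem_insert.1 hj).imp_right (hbelow j)⟩
  · rw [Finset.card_insert_of_notMem fun hi => irrefl i (hbelow i hi), hcard]
  · rw [Finset.coe_insert]
    exact hS.insert fun j hj _ => Or.inr (hbelow j hj)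

lemma chainHeight_lt_chainHeight {i j : ι} (hij : r i j) : chainHeight r i < chainHeight r j := by
  obtain ⟨T, hcard, hT, hbelow⟩ := exists_chain_card_eq_chainHeight_add_one (r := r) i
  refine Nat.lt_of_succ_le (le_csSup (bddAbove_setOf_card _) ⟨T, hcard, hT, fun k hk => ?_⟩)
  rcases hbelow k hk with rfl | hki
  exacts [hij, _root_.trans hki hij]

lemma chainHeight_lt_maxChainCard (i : ι) : chainHeight r i < maxChainCard r := by
  obtain ⟨T, hcard, hT, -⟩ := exists_chain_card_eq_chainHeight_add_one (r := r) i
  exact Nat.lt_of_succ_le (le_csSup (bddAbove_setOf_card _) ⟨T, hcard, hT⟩)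

lemma exists_antichain_colouring :
    ∃ c : ι → Fin (maxChainCard r), ∀ i j, c i = c j → i ≠ j → ¬ r i j :=
  ⟨fun i => ⟨chainHeight r i, chainHeight_lt_maxChainCard i⟩,
    fun _ _ hc _ hr => (chainHeight_lt_chainHeight hr).ne (congrArg Fin.val hc)⟩

theorem sInf_antichain_colourings_eq_maxChainCard :
    sInf {k | ∃ c : ι → Fin k, ∀ i j, c i = c j → i ≠ j → ¬ r i j} = maxChainCard r := by
  obtain ⟨c, hc⟩ := exists_antichain_colouring (r := r)
  refine le_antisymm (Nat.sInf_le ⟨c, hc⟩) (csSup_le ⟨0, ∅, rfl, by simp⟩ ?_)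
  have hne : {k | ∃ c : ι → Fin k, ∀ i j, c i = c j → i ≠ j → ¬ r i j}.Nonempty := ⟨_, c, hc⟩
  obtain ⟨c', hc'⟩ := Nat.sInf_mem hne
  rintro _ ⟨S, rfl, hS⟩
  exact card_le_of_isChain hc' hS

end Mirsky

lemma segSub_refl (Δ : Seg) : SegSub Δ Δ := ⟨le_rfl, le_rfl⟩

lemma SegSub.trans {Δ₁ Δ₂ Δ₃ : Seg} (h₁₂ : SegSub Δ₁ Δ₂) (h₂₃ : SegSub Δ₂ Δ₃) : SegSub Δ₁ Δ₃ :=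
  ⟨h₂₃.1.trans h₁₂.1, h₁₂.2.trans h₂₃.2⟩

lemma segLt_or_segLt_iff (Δ Δ' : Seg) :
    SegLt Δ Δ' ∨ SegLt Δ' Δ ↔ ¬ (SegSub Δ Δ' ∨ SegSub Δ' Δ) := by
  simp only [SegLt, SegSub]
  omega

section SegBefore

variable {ι : Type*} [LinearOrder ι] (f : ι → Seg)

def SegBefore (i j : ι) : Prop :=
  SegSub (f i) (f j) ∧ (¬ SegSub (f j) (f i) ∨ i < j)

instance : IsStrictOrder ι (SegBefore f) where
  irrefl i h := h.2.elim (· (segSub_refl _)) (lt_irrefl i)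
  trans i j k hij hjk := by
    refine ⟨hij.1.trans hjk.1, or_iff_not_imp_left.2 fun hki => ?_⟩
    rw [not_not] at hki
    have hji : SegSub (f j) (f i) := hjk.1.trans hki
    have hkj : SegSub (f k) (f j) := hki.trans hij.1
    exact (hij.2.resolve_left (not_not.2 hji)).trans (hjk.2.resolve_left (not_not.2 hkj))

variable {f}

lemma segBefore_or_segBefore_iff {i j : ι} (hij : i ≠ j) :
    SegBefore f i j ∨ SegBefore f j i ↔ SegSub (f i) (f j) ∨ SegSub (f j) (f i) := by
  refine ⟨Or.imp And.left And.left, fun h => ?_⟩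
  by_cases hji : SegSub (f j) (f i) <;> by_cases hij' : SegSub (f i) (f j)
  · rcases hij.lt_or_gt with hlt | hgt
    exacts [Or.inl ⟨hij', Or.inr hlt⟩, Or.inr ⟨hji, Or.inr hgt⟩]
  · exact Or.inr ⟨hji, Or.inl hij'⟩
  · exact Or.inl ⟨hij', Or.inl hji⟩
  · tauto

lemma isChain_segBefore_iff {S : Set ι} :
    IsChain (SegBefore f) S ↔ ∀ i ∈ S, ∀ j ∈ S, SegSub (f i) (f j) ∨ SegSub (f j) (f i) := by
  refine ⟨fun h i hi j hj => ?_,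
    fun h i hi j hj hij => (segBefore_or_segBefore_iff hij).2 (h i hi j hj)⟩
  rcases eq_or_ne i j with rfl | hij
  · exact Or.inl (segSub_refl _)
  · exact (segBefore_or_segBefore_iff hij).1 (h hi hj hij)

lemma forall_segLt_or_segLt_iff_not_segBefore {κ : Type*} (c : ι → κ) :
    (∀ i j, c i = c j → i ≠ j → SegLt (f i) (f j) ∨ SegLt (f j) (f i)) ↔
      ∀ i j, c i = c j → i ≠ j → ¬ SegBefore f i j := by
  refine ⟨fun h i j hc hij hb => (segLt_or_segLt_iff _ _).1 (h i j hc hij) (Or.inl hb.1),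
    fun h i j hc hij => (segLt_or_segLt_iff _ _).2 fun hsub => ?_⟩
  exact ((segBefore_or_segBefore_iff hij).2 hsub).elim (h i j hc hij) (h j i hc.symm hij.symm)

end SegBefore

/-- Lemma 4.4 (Dilworth): for a finite multiset of segments, given as a function
`f : Fin N → Seg` (indices record multiplicity), the minimal number of chains
under `⪯'` (ladders) needed to partition the multiset equals the maximal size of
a nested family of segments in it, counted with multiplicity. -/
theorem stmt2 {N : ℕ} (f : Fin N → Seg) :
    sInf {k : ℕ | ∃ c : Fin N → Fin k,
        ∀ i j : Fin N, c i = c j → i ≠ j → SegLt (f i) (f j) ∨ SegLt (f j) (f i)} =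
    sSup {k : ℕ | ∃ S : Finset (Fin N), S.card = k ∧
        ∀ i ∈ S, ∀ j ∈ S, SegSub (f i) (f j) ∨ SegSub (f j) (f i)} := by
  simp only [forall_segLt_or_segLt_iff_not_segBefore, ← Finset.mem_coe, ← isChain_segBefore_iff]
  exact sInf_antichain_colourings_eq_maxChainCard
end

section
/- Let λ = (λ_1 ≤ ... ≤ λ_m) and μ = (μ_1 ≤ ... ≤ μ_m) be weakly increasing integer sequences with λ_m ≤ μ_1. Let w ∈ S_m be the maximal-length representative of its double coset with respect to the stabilizers of μ and λ, i.e., w is longest in S^μ w S^λ. Then for 1 ≤ k ≤ m−1: w contains the pattern (k+1)k...21 if and only if there exist indices i_1 < i_2 < ... < i_{k+1} with [λ_{i_{k+1}}, μ_{w(i_{k+1})}] ⊆ ... ⊆ [λ_{i_1}, μ_{w(i_1)}], i.e., the multisegment Σ_i [λ_i, μ_{w(i)}] contains a chain of k+1 nested segments. -/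
/-- The length (number of inversions) of a permutation of `Fin m`. -/
def PermLength {m : ℕ} (w : Equiv.Perm (Fin m)) : ℕ :=
  (Finset.univ.filter (fun p : Fin m × Fin m => p.1 < p.2 ∧ w p.2 < w p.1)).card

/-- `w` is a maximal-length representative of its double coset `S^μ w S^λ`,
where `S^λ`, `S^μ` are the Young subgroups stabilizing the tuples `λ`, `μ`. -/
def MaxInDoubleCoset {m : ℕ} (lam mu : Fin m → ℤ) (w : Equiv.Perm (Fin m)) : Prop :=
  ∀ u v : Equiv.Perm (Fin m), (∀ i, mu (u i) = mu i) → (∀ i, lam (v i) = lam i) →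
    PermLength (u * w * v) ≤ PermLength w

theorem swap_length {m : ℕ} (w : Equiv.Perm (Fin m)) (p q a b : Fin m)
    (hpa : w p = a) (hqb : w q = b) (hpq : p < q) (hab : a < b) :
    PermLength w < PermLength (Equiv.swap a b * w) := by
  classical
  have hinj := w.injective
  set S : Finset (Fin m × Fin m) :=
    Finset.univ.filter (fun z : Fin m × Fin m => z.1 < z.2 ∧ w z.2 < w z.1) with hS
  set S' : Finset (Fin m × Fin m) :=
    Finset.univ.filter (fun z : Fin m × Fin m =>
      z.1 < z.2 ∧ (Equiv.swap a b * w) z.2 < (Equiv.swap a b * w) z.1) with hS'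
  have memS : ∀ x y : Fin m, (x, y) ∈ S ↔ x < y ∧ w y < w x := by
    intro x y; simp [hS]
  have memS' : ∀ x y : Fin m, (x, y) ∈ S' ↔
      x < y ∧ Equiv.swap a b (w y) < Equiv.swap a b (w x) := by
    intro x y; rw [hS', Finset.mem_filter]; simp
  have hpq_notin : (p, q) ∉ S := by
    rw [memS]; rintro ⟨-, h⟩; rw [hpa, hqb] at h; exact absurd hab h.not_gt
  have swl : ∀ c : Fin m, c ≠ a → c ≠ b → Equiv.swap a b c = c := fun c h1 h2 =>
    Equiv.swap_apply_of_ne_of_ne h1 h2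
  let F : Fin m × Fin m → Fin m × Fin m := fun z =>
    if z.1 = q ∧ a < w z.2 ∧ w z.2 < b then (p, z.2)
    else if z.2 = p ∧ a < w z.1 ∧ w z.1 < b then (z.1, q) else z
  -- (p,q) goes through the identity branch
  have Fpq : F (p, q) = (p, q) := by
    show (if _ then _ else _) = _
    rw [if_neg, if_neg]
    · rintro ⟨h1, -⟩; exact hpq.ne' h1
    · rintro ⟨h1, -⟩; exact hpq.ne h1
  have key : ∀ z ∈ insert (p, q) S, F z ∈ S' := by
    rintro ⟨x, y⟩ hz
    show (if _ then _ else _) ∈ S'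
    split_ifs with c1 c2
    · -- branch 1: x = q, a < w y < b ; image (p, y)
      obtain ⟨rfl, hy1, hy2⟩ := c1
      have hzS : (x, y) ∈ S := by
        rcases Finset.mem_insert.1 hz with h | h
        · exfalso; have := (Prod.ext_iff.1 h).1; exact hpq.ne' this
        · exact h
      obtain ⟨hxy, -⟩ := (memS _ _).1 hzS
      rw [memS']
      refine ⟨hpq.trans hxy, ?_⟩
      rw [hpa, Equiv.swap_apply_left, swl _ hy1.ne' hy2.ne]
      exact hy2
    · -- branch 2: y = p, a < w x < b ; image (x, q)
      obtain ⟨rfl, hx1, hx2⟩ := c2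
      have hzS : (x, y) ∈ S := by
        rcases Finset.mem_insert.1 hz with h | h
        · exfalso; have := (Prod.ext_iff.1 h).2; exact hpq.ne this
        · exact h
      obtain ⟨hxy, -⟩ := (memS _ _).1 hzS
      rw [memS']
      refine ⟨hxy.trans hpq, ?_⟩
      rw [hqb, Equiv.swap_apply_right, swl _ hx1.ne' hx2.ne]
      exact hx1
    · -- identity branch
      rcases Finset.mem_insert.1 hz with h | h
      · obtain ⟨h1, h2⟩ := Prod.ext_iff.1 h
        subst h1; subst h2
        rw [memS']
        refine ⟨hpq, ?_⟩
        rw [hpa, hqb, Equiv.swap_apply_left, Equiv.swap_apply_right]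
        exact hab
      · obtain ⟨hxy, hwyx⟩ := (memS _ _).1 h
        rw [memS']
        refine ⟨hxy, ?_⟩
        push_neg at c1 c2
        rcases eq_or_ne (w x) a with hxa | hxa
        · have hya : w y < a := hxa ▸ hwyx
          rw [hxa, Equiv.swap_apply_left, swl _ hya.ne (hya.trans hab).ne]
          exact hya.trans hab
        · rcases eq_or_ne (w x) b with hxb | hxb
          · have hx : x = q := hinj (hxb.trans hqb.symm)
            have hyb : w y < b := hxb ▸ hwyx
            have hya : w y < a := by
              rcases lt_trichotomy (w y) a with h' | h' | h'
              · exact h'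
              · exfalso
                have : y = p := hinj (by rw [h', hpa])
                subst this; exact absurd (hxy.trans' (hx ▸ hpq)) (lt_irrefl _)
              · exact absurd (c1 hx h') hyb.not_ge
            rw [hxb, Equiv.swap_apply_right, swl _ hya.ne (hya.trans hab).ne]
            exact hya
          · rcases eq_or_ne (w y) a with hya | hya
            · have hy : y = p := hinj (hya.trans hpa.symm)
              have hxa' : a < w x := hya ▸ hwyx
              have hxb' : b < w x := lt_of_le_of_ne (c2 hy hxa') (Ne.symm hxb)
              rw [hya, Equiv.swap_apply_left, swl _ hxa hxb]
              exact hxb'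
            · rcases eq_or_ne (w y) b with hyb | hyb
              · rw [hyb, Equiv.swap_apply_right, swl _ hxa hxb]
                exact hab.trans (hyb ▸ hwyx)
              · rw [swl _ hya hyb, swl _ hxa hxb]
                exact hwyx
  have hinjF : Set.InjOn F (insert (p, q) S : Finset (Fin m × Fin m)) := by
    rintro ⟨x1, y1⟩ h1 ⟨x2, y2⟩ h2 heq
    have mem1 : (x1, y1) = (p, q) ∨ (x1 < y1 ∧ w y1 < w x1) := by
      rcases Finset.mem_insert.1 h1 with h | h
      · exact Or.inl h
      · exact Or.inr ((memS _ _).1 h)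
    have mem2 : (x2, y2) = (p, q) ∨ (x2 < y2 ∧ w y2 < w x2) := by
      rcases Finset.mem_insert.1 h2 with h | h
      · exact Or.inl h
      · exact Or.inr ((memS _ _).1 h)
    have hF1 : F (x1, y1) = F (x2, y2) := heq
    show (x1, y1) = (x2, y2)
    simp only [F] at hF1
    split_ifs at hF1 with c1 c2 c3 c4 c5 c6 c7 c8 <;>
      obtain ⟨e1, e2⟩ := Prod.ext_iff.1 hF1 <;> simp only at e1 e2
    -- case 1: c1, c2 : (p,y1) = (p,y2)
    · rw [Prod.ext_iff]; exact ⟨c1.1.trans c2.1.symm, e2⟩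
    -- case 2: c1, ¬c2, c3 : (p,y1) = (x2,q)
    · exfalso; subst e2
      exact absurd (hqb ▸ c1.2.2) (lt_irrefl _)
    -- case 3: c1, ¬c2, ¬c3 : (p,y1) = (x2,y2)
    · exfalso; subst e1; subst e2
      rcases mem2 with h | ⟨-, hwlt⟩
      · have h2' : y1 = q := (Prod.ext_iff.1 h).2
        subst h2'; exact absurd (hqb ▸ c1.2.2) (lt_irrefl _)
      · rw [hpa] at hwlt; exact absurd c1.2.1 hwlt.asymm
    -- case 4: ¬c1, c4, c5 : (x1,q) = (p,y2)
    · exfalso; subst e1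
      exact absurd (hpa ▸ c4.2.1) (lt_irrefl _)
    -- case 5: ¬c1, c4, ¬c5, c6 : (x1,q) = (x2,q)
    · rw [Prod.ext_iff]; exact ⟨e1, c4.1.trans c6.1.symm⟩
    -- case 6: ¬c1, c4, ¬c5, ¬c6 : (x1,q) = (x2,y2)
    · exfalso; subst e1; subst e2
      rcases mem2 with h | ⟨-, hwlt⟩
      · have h1' : x1 = p := (Prod.ext_iff.1 h).1
        subst h1'
        rcases mem1 with h' | ⟨hlt, -⟩
        · exact absurd ((Prod.ext_iff.1 h').2) (by rw [c4.1]; exact hpq.ne)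
        · rw [c4.1] at hlt; exact absurd hlt (lt_irrefl _)
      · rw [hqb] at hwlt; exact absurd c4.2.2 hwlt.asymm
    -- case 7: ¬c1, ¬c4, c7 : (x1,y1) = (p,y2)
    · exfalso; subst e1; subst e2
      rcases mem1 with h | ⟨-, hwlt⟩
      · have h2' : y1 = q := (Prod.ext_iff.1 h).2
        subst h2'; exact absurd (hqb ▸ c7.2.2) (lt_irrefl _)
      · rw [hpa] at hwlt; exact absurd c7.2.1 hwlt.asymm
    -- case 8: ¬c1, ¬c4, ¬c7, c8 : (x1,y1) = (x2,q)
    · exfalso; subst e1; subst e2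
      rcases mem1 with h | ⟨-, hwlt⟩
      · have h1' : x1 = p := (Prod.ext_iff.1 h).1
        subst h1'
        rcases mem2 with h' | ⟨hlt, -⟩
        · exact absurd ((Prod.ext_iff.1 h').2) (by rw [c8.1]; exact hpq.ne)
        · rw [c8.1] at hlt; exact absurd hlt (lt_irrefl _)
      · rw [hqb] at hwlt; exact absurd c8.2.2 hwlt.asymm
    -- case 9: identity
    · rw [Prod.ext_iff]; exact ⟨e1, e2⟩
  have hcard : (insert (p, q) S).card ≤ S'.card :=
    Finset.card_le_card_of_injOn F key hinjF
  have hlt : S.card < (insert (p, q) S).card := by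
    rw [Finset.card_insert_of_notMem hpq_notin]; omega
  exact lt_of_lt_of_le hlt hcard

theorem mu_eq_forces {m : ℕ} (lam mu : Fin m → ℤ) (w : Equiv.Perm (Fin m))
    (hw : MaxInDoubleCoset lam mu w) (p q : Fin m) (hpq : p < q)
    (hmueq : mu (w p) = mu (w q)) : w q < w p := by
  rcases lt_trichotomy (w q) (w p) with h | h | h
  · exact h
  · exact absurd (w.injective h) hpq.ne'
  · exfalso
    have hu : ∀ i, mu (Equiv.swap (w p) (w q) i) = mu i := by
      intro i
      rcases eq_or_ne i (w p) with rfl | h1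
      · rw [Equiv.swap_apply_left]; exact hmueq.symm
      · rcases eq_or_ne i (w q) with rfl | h2
        · rw [Equiv.swap_apply_right]; exact hmueq
        · rw [Equiv.swap_apply_of_ne_of_ne h1 h2]
    have hle := hw (Equiv.swap (w p) (w q)) 1 hu (fun i => rfl)
    rw [mul_one] at hle
    exact absurd (swap_length w p q (w p) (w q) rfl rfl hpq h) hle.not_gt

/-- Lemma 4.10: for weakly increasing `λ, μ` with `λ_m ≤ μ_1` and `w` a longest
double-coset representative, `w` contains the decreasing pattern `(k+1)k…21`
iff the multisegment `Σᵢ [λᵢ, μ_{w(i)}]` contains a chain of `k+1` nested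
segments. -/
theorem stmt4 {m : ℕ} (lam mu : Fin m → ℤ) (hlam : Monotone lam) (hmu : Monotone mu)
    (hsep : ∀ i j : Fin m, lam i ≤ mu j)
    (w : Equiv.Perm (Fin m)) (hw : MaxInDoubleCoset lam mu w)
    (k : ℕ) (hk1 : 1 ≤ k) (hk2 : k ≤ m - 1) :
    (∃ idx : Fin (k + 1) → Fin m, StrictMono idx ∧
        ∀ t t' : Fin (k + 1), t < t' → w (idx t') < w (idx t)) ↔
    (∃ idx : Fin (k + 1) → Fin m, StrictMono idx ∧
        ∀ t t' : Fin (k + 1), t < t' →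
          lam (idx t) ≤ lam (idx t') ∧ mu (w (idx t')) ≤ mu (w (idx t))) := by
  constructor
  · rintro ⟨idx, hmono, hdec⟩
    exact ⟨idx, hmono, fun t t' h =>
      ⟨hlam (hmono h).le, hmu (hdec t t' h).le⟩⟩
  · rintro ⟨idx, hmono, hchain⟩
    refine ⟨idx, hmono, fun t t' h => ?_⟩
    obtain ⟨-, h2⟩ := hchain t t' h
    have hij : idx t < idx t' := hmono h
    rcases lt_trichotomy (w (idx t')) (w (idx t)) with h' | h' | h'
    · exact h'
    · exact absurd (w.injective h') hij.ne'
    · have : mu (w (idx t)) = mu (w (idx t')) := le_antisymm (hmu h'.le) h2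
      exact mu_eq_forces lam mu w hw (idx t) (idx t') hij this
end

section
/- Let λ = (λ_1 ≤ ... ≤ λ_m) and μ = (μ_1 ≤ ... ≤ μ_m) be weakly increasing integer sequences, and let x, w ∈ S_m both be maximal-length representatives of their double cosets S^μ x S^λ and S^μ w S^λ. If x ≰ w in the Bruhat order on S_m, then there exist indices 1 ≤ i, j ≤ m such that #{i' ≤ i : x(i') ≥ j} > #{i' ≤ i : w(i') ≥ j}, and moreover (λ_i < λ_{i+1} or i = m) and (μ_{j−1} < μ_j or j = 1). -/
/-- The Bruhat order on `S_m`. -/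
def BruhatLE {m : ℕ} (x w : Equiv.Perm (Fin m)) : Prop :=
  Relation.ReflTransGen
    (fun y z => PermLength y < PermLength z ∧
      ∃ t : Equiv.Perm (Fin m), t.IsSwap ∧ z = t * y) x w

open Finset Equiv

section Blocks

variable {α β : Type*} [LinearOrder α] [Fintype α] [LinearOrder β] {f : α → β}
  {p q : α → Prop} [DecidablePred p] [DecidablePred q]

lemma exists_block_end_of_card_filter_lt (hf : Monotone f) (S : Finset α)
    (hS : ∀ a ∈ S, ∀ b, f b ≤ f a → b ∈ S) (h : #(S.filter p) < #(S.filter q)) :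
    ∃ e, (∀ b, e < b → f e < f b) ∧ #{a | a ≤ e ∧ p a} < #{a | a ≤ e ∧ q a} := by
  have hne : S.Nonempty := nonempty_of_ne_empty (by rintro rfl; simp at h)
  have hmem : ∀ a, a ∈ S ↔ a ≤ S.max' hne := fun a =>
    ⟨(S.le_max' a ·), fun ha => hS _ (S.max'_mem hne) a (hf ha)⟩
  refine ⟨S.max' hne, fun b hb => ?_, ?_⟩
  · by_contra! hfb
    exact hb.not_ge ((hmem b).mp (hS _ (S.max'_mem hne) b hfb))
  · convert h using 2 <;> ext a <;> simp [hmem]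

lemma card_filter_le_eq_add_card_block (hf : Monotone f) (i : α) (r : α → Prop) [DecidablePred r] :
    #{a | a ≤ i ∧ r a} = #(filter r {b | f b < f i}) + #{a | a ≤ i ∧ f a = f i ∧ r a} := by
  rw [← card_union_of_disjoint]
  · congr 1; ext a; simp only [mem_filter, mem_univ, true_and, mem_union]
    constructor
    · rintro ⟨hai, hra⟩
      rcases (hf hai).lt_or_eq with hlt | heq
      exacts [Or.inl ⟨hlt, hra⟩, Or.inr ⟨hai, heq, hra⟩]
    · rintro (⟨hlt, hra⟩ | ⟨hai, -, hra⟩)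
      exacts [⟨(hf.reflect_lt hlt).le, hra⟩, ⟨hai, hra⟩]
  · simp only [disjoint_left, mem_filter, mem_univ, true_and]
    exact fun a ha hb => ha.1.ne hb.2.1

theorem exists_block_end_card_lt (hf : Monotone f) (hp : ∀ a b, b ≤ a → f b = f a → p a → p b)
    {i : α} (h : #{a | a ≤ i ∧ p a} < #{a | a ≤ i ∧ q a}) :
    ∃ e, (∀ b, e < b → f e < f b) ∧ #{a | a ≤ e ∧ p a} < #{a | a ≤ e ∧ q a} := by
  by_cases hblock : ∃ a ≤ i, f a = f i ∧ ¬ p a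
  · obtain ⟨a, hai, hfa, hpa⟩ := hblock
    refine exists_block_end_of_card_filter_lt hf {b | f b ≤ f i}
      (fun b hb c hc => by simpa using hc.trans (by simpa using hb)) ?_
    calc #(filter p {b | f b ≤ f i}) ≤ #{a | a ≤ i ∧ p a} := by
          refine card_le_card fun b hb => ?_
          simp only [mem_filter, mem_univ, true_and] at hb ⊢
          refine ⟨le_of_not_gt fun hib => hpa (hp b a (hai.trans hib.le) ?_ hb.2), hb.2⟩
          exact le_antisymm (hf (hai.trans hib.le)) (hfa ▸ hb.1)
      _ < #{a | a ≤ i ∧ q a} := h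
      _ ≤ #(filter q {b | f b ≤ f i}) := by
          refine card_le_card fun b hb => ?_
          simp only [mem_filter, mem_univ, true_and] at hb ⊢
          exact ⟨hf hb.1, hb.2⟩
  · push Not at hblock
    refine exists_block_end_of_card_filter_lt hf {b | f b < f i}
      (fun b hb c hc => by simpa using hc.trans_lt (by simpa using hb)) ?_
    have hblock' : #{a | a ≤ i ∧ f a = f i ∧ q a} ≤ #{a | a ≤ i ∧ f a = f i ∧ p a} :=
      card_le_card fun a ha => by
        simp only [mem_filter, mem_univ, true_and] at ha ⊢
        exact ⟨ha.1, ha.2.1, hblock a ha.1 ha.2.1⟩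
    have := card_filter_le_eq_add_card_block hf i p
    have := card_filter_le_eq_add_card_block hf i q
    omega

theorem exists_block_start_card_lt (hf : Monotone f) (hp : ∀ a b, a ≤ b → f a = f b → p a → p b)
    {j : α} (h : #{a | j ≤ a ∧ p a} < #{a | j ≤ a ∧ q a}) :
    ∃ s, (∀ b, b < s → f b < f s) ∧ #{a | s ≤ a ∧ p a} < #{a | s ≤ a ∧ q a} :=
  exists_block_end_card_lt (α := αᵒᵈ) (β := βᵒᵈ) (f := OrderDual.toDual ∘ f ∘ OrderDual.ofDual)
    (p := p ∘ OrderDual.ofDual) (q := q ∘ OrderDual.ofDual) hf.dual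
    (fun a b hab hfab => hp a b hab hfab.symm) h

end Blocks

variable {m : ℕ}

def inversions (v : Perm (Fin m)) : Finset (Fin m × Fin m) := {p | p.1 < p.2 ∧ v p.2 < v p.1}

@[simp]
lemma mem_inversions {v : Perm (Fin m)} {p : Fin m × Fin m} :
    p ∈ inversions v ↔ p.1 < p.2 ∧ v p.2 < v p.1 := by
  simp [inversions]

theorem permLength_lt_mul_swap {x : Perm (Fin m)} {i k : Fin m} (hik : i < k) (hx : x i < x k) :
    PermLength x < PermLength (x * swap i k) := by
  set σ := swap i k
  let φ : Fin m × Fin m → Fin m × Fin m := fun p => if σ p.1 < σ p.2 then (σ p.1, σ p.2) else p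
  have hinv : (i, k) ∈ inversions (x * σ) := by simpa [σ, hik] using hx
  have hmaps : Set.MapsTo φ (inversions x) ((inversions (x * σ)).erase (i, k)) := by
    rintro ⟨a, b⟩ hab
    simp only [mem_coe, mem_inversions] at hab
    simp only [φ, mem_coe, mem_erase, mem_inversions, Perm.mul_apply]
    split_ifs with h
    -- The pairs `a < b` reversed by `σ` are `(i, k)`, `(i, l)`, `(l, k)` with `i < l < k`.
    all_goals simp only [σ, swap_apply_def] at h ⊢; grind
  have hinj : Set.InjOn φ (inversions x) := by
    rintro ⟨a, b⟩ hab ⟨c, d⟩ hcd he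
    simp only [mem_coe, mem_inversions] at hab hcd
    simp only [φ] at he
    split_ifs at he with h1 h2 h2 <;> simp only [Prod.mk.injEq] at he
    · simpa [σ] using he
    · exact absurd hab.1 (by simpa [← he.1, ← he.2, σ] using h2)
    · exact absurd hcd.1 (by simpa [he.1, he.2, σ] using h1)
    · exact Prod.ext he.1 he.2
  calc PermLength x ≤ #((inversions (x * σ)).erase (i, k)) := card_le_card_of_injOn φ hmaps hinj
    _ < PermLength (x * σ) := card_erase_lt_of_mem hinv

namespace MaxInDoubleCoset

variable {lam mu : Fin m → ℤ} {w : Perm (Fin m)}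

lemma apply_le_of_lam_eq (hw : MaxInDoubleCoset lam mu w) {a b : Fin m} (hab : a ≤ b)
    (h : lam a = lam b) : w b ≤ w a := by
  rcases hab.eq_or_lt with rfl | hab
  · rfl
  by_contra! hlt
  have := hw 1 (swap a b) (fun _ => rfl) (apply_swap_eq_self h)
  rw [one_mul] at this
  exact this.not_gt (permLength_lt_mul_swap hab hlt)

lemma symm_apply_le_of_mu_eq (hw : MaxInDoubleCoset lam mu w) {a b : Fin m} (hab : a ≤ b)
    (h : mu a = mu b) : w.symm b ≤ w.symm a := by
  rcases hab.eq_or_lt with rfl | hab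
  · rfl
  by_contra! hlt
  have := hw (swap a b) 1 (apply_swap_eq_self h) (fun _ => rfl)
  rw [mul_one, swap_mul_eq_mul_swap] at this
  exact this.not_gt (permLength_lt_mul_swap hlt (by simpa using hab))

end MaxInDoubleCoset

def dotCount (v : Perm (Fin m)) (i j : Fin m) : ℕ := #{i' | i' ≤ i ∧ j ≤ v i'}

lemma dotCount_eq_card_symm (v : Perm (Fin m)) (i j : Fin m) :
    dotCount v i j = #{c | j ≤ c ∧ v.symm c ≤ i} :=
  card_equiv v fun a => by simp [and_comm]

lemma dotCount_mul_swap {x : Perm (Fin m)} {i k : Fin m} (hik : i < k) (hx : x i < x k)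
    (a j : Fin m) :
    dotCount (x * swap i k) a j =
      dotCount x a j + if i ≤ a ∧ a < k ∧ x i < j ∧ j ≤ x k then 1 else 0 := by
  simp only [dotCount, card_filter]
  rw [← Equiv.sum_comp (swap i k) (fun l => if l ≤ a ∧ j ≤ (x * swap i k) l then 1 else 0)]
  zify
  rw [← sub_eq_iff_eq_add', ← sum_sub_distrib, Fintype.sum_eq_add i k hik.ne]
  · simp only [swap_apply_left, swap_apply_right]
    grind
  · rintro l ⟨hli, hlk⟩
    simp [swap_apply_of_ne_of_ne hli hlk]

section Dominance

variable {x w : Perm (Fin m)}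

lemma card_lt_apply_le_of_dotCount_le (hdom : ∀ a j, dotCount x a j ≤ dotCount w a j)
    (a c : Fin m) :
    #{l | l ≤ a ∧ c < x l} ≤ #{l | l ≤ a ∧ c < w l} := by
  by_cases hc : (c : ℕ) + 1 < m
  · have hsucc : ∀ d : Fin m, c < d ↔ (⟨c + 1, hc⟩ : Fin m) ≤ d := fun d => by
      simp only [Fin.lt_def, Fin.le_def]; omega
    simpa only [dotCount, hsucc] using hdom a ⟨c + 1, hc⟩
  · have hnone : ∀ d : Fin m, ¬ c < d := fun d => by simp only [Fin.lt_def]; omega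
    simp [hnone]

lemma dotCount_lt_of_eq_below (hdom : ∀ a j, dotCount x a j ≤ dotCount w a j) {i a j : Fin m}
    (hpre : ∀ l < i, x l = w l) (hia : i ≤ a)
    (hgap : ∀ l, i < l → l ≤ a → x i < x l → w i < x l) (hxj : x i < j) (hjw : j ≤ w i) :
    dotCount x a j < dotCount w a j := by
  -- Beyond `i`, the values `≥ j` of `x` are exactly those `> w i`; at threshold `w i + 1`
  -- dominance applies, and `i` itself is counted for `w` at `j` but not at `w i + 1`.
  set S : Perm (Fin m) → Finset (Fin m) := fun v => {l | l ≤ a ∧ j ≤ v l}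
  set T : Perm (Fin m) → Finset (Fin m) := fun v => {l | l ≤ a ∧ w i < v l}
  have hTS : ∀ v, T v ⊆ S v := fun v l hl => by
    simp only [T, S, mem_filter, mem_univ, true_and] at hl ⊢
    exact ⟨hl.1, hjw.trans hl.2.le⟩
  have hi : i ∈ S w \ T w := by simp [S, T, hia, hjw]
  have hsub : S x \ T x ⊂ S w \ T w := by
    refine LE.le.trans_ssubset (fun l hl => ?_) (erase_ssubset hi)
    simp only [S, T, mem_sdiff, mem_filter, mem_univ, true_and, not_and, not_lt, mem_erase] at hl ⊢
    obtain ⟨⟨hla, hjl⟩, hle⟩ := hl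
    rcases lt_trichotomy l i with hli | rfl | hil
    · rw [← hpre l hli]
      exact ⟨hli.ne, ⟨hla, hjl⟩, hle⟩
    · exact absurd (hxj.trans_le hjl) (lt_irrefl _)
    · exact absurd (hgap l hil hla (hxj.trans_le hjl)) (hle hla).not_gt
  calc dotCount x a j = #(S x \ T x) + #(T x) := (card_sdiff_add_card_eq_card (hTS x)).symm
    _ < #(S w \ T w) + #(T w) := add_lt_add_of_lt_of_le (card_lt_card hsub)
        (card_lt_apply_le_of_dotCount_le hdom a (w i))
    _ = dotCount w a j := card_sdiff_add_card_eq_card (hTS w)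

lemma apply_lt_apply_of_eq_below (hdom : ∀ a j, dotCount x a j ≤ dotCount w a j) {i : Fin m}
    (hpre : ∀ l < i, x l = w l) (hne : x i ≠ w i) : x i < w i := by
  refine (le_of_not_gt fun hwx => (hdom i (x i)).not_gt (card_lt_card ?_)).lt_of_ne hne
  have hi : i ∈ ({l | l ≤ i ∧ x i ≤ x l} : Finset _) := by simp
  refine LE.le.trans_ssubset (fun l hl => ?_) (erase_ssubset hi)
  simp only [mem_filter, mem_univ, true_and, mem_erase] at hl ⊢
  rcases hl.1.lt_or_eq with hli | rfl
  · exact ⟨hli.ne, hl.1, hpre l hli ▸ hl.2⟩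
  · exact absurd hl.2 hwx.not_ge

lemma exists_swap_dotCount_le (hdom : ∀ a j, dotCount x a j ≤ dotCount w a j) (hxw : x ≠ w) :
    ∃ i k, i < k ∧ x i < x k ∧ ∀ a j, dotCount (x * swap i k) a j ≤ dotCount w a j := by
  obtain ⟨i, hi, hmin⟩ := wellFounded_lt.has_min {l | x l ≠ w l}
    (by simpa [Set.Nonempty, Perm.ext_iff] using hxw)
  have hpre : ∀ l < i, x l = w l := fun l hl => not_not.mp fun h => hmin l h hl
  have hxi := apply_lt_apply_of_eq_below hdom hpre hi
  have hi_lt : i < x.symm (w i) := by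
    refine (le_of_not_gt fun hl => hl.ne ?_).lt_of_ne fun h => hi ?_
    · exact w.injective (by rw [← hpre _ hl, x.apply_symm_apply])
    · rw [h, x.apply_symm_apply, ← h]
  obtain ⟨k, ⟨hik, hxk, hkw⟩, hkmin⟩ := wellFounded_lt.has_min {l | i < l ∧ x i < x l ∧ x l ≤ w i}
    ⟨x.symm (w i), hi_lt, by simpa using hxi, by simp⟩
  refine ⟨i, k, hik, hxk, fun a j => ?_⟩
  rw [dotCount_mul_swap hik hxk]
  split_ifs with h
  · obtain ⟨hia, hak, hxj, hjk⟩ := h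
    refine dotCount_lt_of_eq_below hdom hpre hia (fun l hil hla hxl => ?_) hxj (hjk.trans hkw)
    exact lt_of_not_ge fun hlw => hkmin l ⟨hil, hxl, hlw⟩ (hla.trans_lt hak)
  · exact hdom a j

end Dominance

theorem bruhatLE_of_dotCount_le {x w : Perm (Fin m)}
    (hdom : ∀ a j, dotCount x a j ≤ dotCount w a j) : BruhatLE x w := by
  by_cases hxw : x = w
  · exact hxw ▸ .refl
  obtain ⟨i, k, hik, hxk, hdom'⟩ := exists_swap_dotCount_le hdom hxw
  have hstep : PermLength x < PermLength (x * swap i k) ∧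
      ∃ t : Perm (Fin m), t.IsSwap ∧ x * swap i k = t * x :=
    ⟨permLength_lt_mul_swap hik hxk, _, ⟨_, _, hxk.ne, rfl⟩, mul_swap_eq_swap_mul x i k⟩
  exact .head hstep (bruhatLE_of_dotCount_le hdom')
termination_by (∑ a, ∑ j, dotCount w a j) - ∑ a, ∑ j, dotCount x a j
decreasing_by
  have hle : ∀ a j, dotCount x a j ≤ dotCount (x * swap i k) a j := fun a j => by
    rw [dotCount_mul_swap hik hxk]; exact Nat.le_add_right _ _
  have hlt : dotCount x i (x k) < dotCount (x * swap i k) i (x k) := by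
    rw [dotCount_mul_swap hik hxk, if_pos ⟨le_rfl, hik, hxk, le_rfl⟩]; exact Nat.lt_succ_self _
  have h1 := sum_lt_sum (fun a _ => sum_le_sum fun j _ => hle a j)
    ⟨i, mem_univ _, sum_lt_sum (fun j _ => hle i j) ⟨x k, mem_univ _, hlt⟩⟩
  have h2 := sum_le_sum fun a (_ : a ∈ univ) => sum_le_sum fun j (_ : j ∈ univ) => hdom' a j
  omega

/-- Indices are zero-based: the paper's condition "`μ_{j-1} < μ_j` or `j = 1`" reads
"`μ_{j-1} < μ_j` or `j = 0`" here. -/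
theorem stmt5 {m : ℕ} (lam mu : Fin m → ℤ) (hlam : Monotone lam) (hmu : Monotone mu)
    (x w : Equiv.Perm (Fin m))
    (hw : MaxInDoubleCoset lam mu w)
    (hnle : ¬ BruhatLE x w) :
    ∃ i j : Fin m,
      (Finset.univ.filter (fun i' : Fin m => i' ≤ i ∧ j ≤ w i')).card <
        (Finset.univ.filter (fun i' : Fin m => i' ≤ i ∧ j ≤ x i')).card ∧
      (∀ h : (i : ℕ) + 1 < m, lam i < lam ⟨(i : ℕ) + 1, h⟩) ∧
      (∀ _ : 0 < (j : ℕ), mu ⟨(j : ℕ) - 1, by omega⟩ < mu j) := by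
  obtain ⟨i, j, hij⟩ : ∃ i j, dotCount w i j < dotCount x i j := by
    by_contra! h
    exact hnle (bruhatLE_of_dotCount_le h)
  obtain ⟨i, hi, hij⟩ : ∃ i, (∀ b, i < b → lam i < lam b) ∧ dotCount w i j < dotCount x i j :=
    exists_block_end_card_lt hlam
      (fun a b hba hlab hja => hja.trans (hw.apply_le_of_lam_eq hba hlab)) hij
  rw [dotCount_eq_card_symm, dotCount_eq_card_symm] at hij
  obtain ⟨j, hj, hij⟩ := exists_block_start_card_lt hmu
    (fun a b hab hmab hai => (hw.symm_apply_le_of_mu_eq hab hmab).trans hai) hij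
  refine ⟨i, j, ?_, fun h => hi _ (Fin.lt_def.mpr (Nat.lt_succ_self _)),
    fun h => hj _ (Fin.lt_def.mpr (by simp only; omega))⟩
  show dotCount w i j < dotCount x i j
  rwa [dotCount_eq_card_symm, dotCount_eq_card_symm]
end

section
/- The number of permutations in S_n avoiding both the pattern 321 and the pattern 3412 equals the Fibonacci number F_{2n−1}, where F_1 = F_2 = 1 and F_{k+2} = F_{k+1} + F_k. -/
/-!
Write `w ∈ S_{n+1}` as its first entry `c` followed by `v ∈ S_n`, the standardization of the
remaining entries. An occurrence of 321 or 3412 in `w` either lies in `v` or starts at the first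
entry, and occurrences of the second kind are excluded exactly when `v` fixes `0, …, c - 2`.
Peeling off fixed first entries (the case `c = 0`) shows that the avoiders in `S_n` fixing
`0, …, k - 1` are counted by `a (n - k)`, where `a n` is the number of avoiders in `S_n`. So the
fibre over `c = 0` has `a n` elements and the fibre over `c ≥ 1` has `a (n + 1 - c)`. Hence
`a (n + 1) = a n + ∑_{k=1}^{n} a k`, which together with `∑_{k=1}^{n} F_{2k-1} = F_{2n}` gives
`a n = F_{2n-1}`.
-/

open Equiv Finset

section PatternEmbedding

variable {m N : ℕ} {w : Perm (Fin N)} {u : Perm (Fin m)} {θ χ : Fin m → Fin N}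

lemma Avoids321.of_apply_eq (hθ : StrictMono θ) (hχ : StrictMono χ)
    (h : ∀ j, w (θ j) = χ (u j)) (hw : Avoids321 w) : Avoids321 u := by
  have key (a b) : w (θ a) < w (θ b) ↔ u a < u b := by rw [h, h, hχ.lt_iff_lt]
  rintro ⟨i, j, k, hij, hjk, h₁, h₂⟩
  exact hw ⟨θ i, θ j, θ k, hθ hij, hθ hjk, (key k j).2 h₁, (key j i).2 h₂⟩

lemma Avoids3412.of_apply_eq (hθ : StrictMono θ) (hχ : StrictMono χ)
    (h : ∀ j, w (θ j) = χ (u j)) (hw : Avoids3412 w) : Avoids3412 u := by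
  have key (a b) : w (θ a) < w (θ b) ↔ u a < u b := by rw [h, h, hχ.lt_iff_lt]
  rintro ⟨i, j, k, l, hij, hjk, hkl, h₁, h₂, h₃⟩
  exact hw ⟨θ i, θ j, θ k, θ l, hθ hij, hθ hjk, hθ hkl, (key k l).2 h₁, (key l i).2 h₂,
    (key i j).2 h₃⟩

end PatternEmbedding

namespace Fin

variable {n : ℕ}

/-- In one-line notation, `consPerm c v` is `c` followed by `v` with every value `≥ c` raised
by one. -/
def consPerm (c : Fin (n + 1)) (v : Perm (Fin n)) : Perm (Fin (n + 1)) :=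
  c.cycleRange⁻¹ * Perm.decomposeFin.symm (0, v)

@[simp]
lemma consPerm_zero (c : Fin (n + 1)) (v : Perm (Fin n)) : consPerm c v 0 = c := by
  simp [consPerm]

@[simp]
lemma consPerm_succ (c : Fin (n + 1)) (v : Perm (Fin n)) (i : Fin n) :
    consPerm c v i.succ = c.succAbove (v i) := by
  simp [consPerm]

lemma consPerm_injective :
    Function.Injective fun x : Fin (n + 1) × Perm (Fin n) ↦ consPerm x.1 x.2 := by
  rintro ⟨c, v⟩ ⟨c', v'⟩ h
  obtain rfl : c = c' := by simpa using congr($h 0)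
  exact Prod.ext rfl (Equiv.ext fun i ↦ by simpa using congr($h i.succ))

noncomputable def consPermEquiv : Fin (n + 1) × Perm (Fin n) ≃ Perm (Fin (n + 1)) :=
  Equiv.ofBijective _ <| (Nat.bijective_iff_injective_and_card _).2
    ⟨consPerm_injective, by simp [Fintype.card_perm, Nat.factorial_succ]⟩

lemma natCard_subtype_eq_sum_consPerm (P : Perm (Fin (n + 1)) → Prop) :
    Nat.card {w // P w} = ∑ c, Nat.card {v : Perm (Fin n) // P (consPerm c v)} := by
  rw [← Nat.card_sigma]
  exact Nat.card_congr <| (consPermEquiv.subtypeEquiv fun _ ↦ Iff.rfl).symm.trans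
    (Equiv.subtypeProdEquivSigmaSubtype fun c v ↦ P (consPerm c v))

lemma avoids321_consPerm_iff (c : Fin (n + 1)) (v : Perm (Fin n)) :
    Avoids321 (consPerm c v) ↔
      Avoids321 v ∧ ¬ ∃ j k, j < k ∧ v k < v j ∧ (v j).castSucc < c := by
  refine ⟨fun hw ↦ ⟨hw.of_apply_eq strictMono_succ (strictMono_succAbove c) (consPerm_succ c v),
    ?_⟩, ?_⟩
  · rintro ⟨j, k, hjk, h₁, h₂⟩
    exact hw ⟨0, j.succ, k.succ, succ_pos j, succ_lt_succ_iff.2 hjk,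
      by simpa [succAbove_lt_succAbove_iff], by simpa [succAbove_lt_iff_castSucc_lt]⟩
  · rintro ⟨hv, h0⟩ ⟨i, j, k, hij, hjk, h₁, h₂⟩
    obtain ⟨j, rfl⟩ := exists_succ_eq.2 (ne_zero_of_lt hij)
    obtain ⟨k, rfl⟩ := exists_succ_eq.2 (ne_zero_of_lt hjk)
    rcases eq_zero_or_eq_succ i with rfl | ⟨i, rfl⟩
    · simp only [consPerm_zero, consPerm_succ, succAbove_lt_succAbove_iff,
        succAbove_lt_iff_castSucc_lt, succ_lt_succ_iff] at h₁ h₂ hjk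
      exact h0 ⟨j, k, hjk, h₁, h₂⟩
    · simp only [consPerm_succ, succAbove_lt_succAbove_iff, succ_lt_succ_iff] at h₁ h₂ hij hjk
      exact hv ⟨i, j, k, hij, hjk, h₁, h₂⟩

lemma avoids3412_consPerm_iff (c : Fin (n + 1)) (v : Perm (Fin n)) :
    Avoids3412 (consPerm c v) ↔ Avoids3412 v ∧
      ¬ ∃ j k l, j < k ∧ k < l ∧ v k < v l ∧ (v l).castSucc < c ∧ c ≤ (v j).castSucc := by
  refine ⟨fun hw ↦ ⟨hw.of_apply_eq strictMono_succ (strictMono_succAbove c) (consPerm_succ c v),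
    ?_⟩, ?_⟩
  · rintro ⟨j, k, l, hjk, hkl, h₁, h₂, h₃⟩
    exact hw ⟨0, j.succ, k.succ, l.succ, succ_pos j, succ_lt_succ_iff.2 hjk,
      succ_lt_succ_iff.2 hkl, by simpa [succAbove_lt_succAbove_iff],
      by simpa [succAbove_lt_iff_castSucc_lt], by simpa [lt_succAbove_iff_le_castSucc]⟩
  · rintro ⟨hv, h0⟩ ⟨i, j, k, l, hij, hjk, hkl, h₁, h₂, h₃⟩
    obtain ⟨j, rfl⟩ := exists_succ_eq.2 (ne_zero_of_lt hij)
    obtain ⟨k, rfl⟩ := exists_succ_eq.2 (ne_zero_of_lt hjk)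
    obtain ⟨l, rfl⟩ := exists_succ_eq.2 (ne_zero_of_lt hkl)
    rcases eq_zero_or_eq_succ i with rfl | ⟨i, rfl⟩
    · simp only [consPerm_zero, consPerm_succ, succAbove_lt_succAbove_iff,
        succAbove_lt_iff_castSucc_lt, lt_succAbove_iff_le_castSucc, succ_lt_succ_iff]
        at h₁ h₂ h₃ hjk hkl
      exact h0 ⟨j, k, l, hjk, hkl, h₁, h₂, h₃⟩
    · simp only [consPerm_succ, succAbove_lt_succAbove_iff, succ_lt_succ_iff]
        at h₁ h₂ h₃ hij hjk hkl
      exact hv ⟨i, j, k, l, hij, hjk, hkl, h₁, h₂, h₃⟩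

section FirstEntryPatterns

variable {c : Fin (n + 1)} {v : Perm (Fin n)}

lemma apply_eq_self_of_succ_lt
    (h321 : ¬ ∃ j k, j < k ∧ v k < v j ∧ (v j).castSucc < c)
    (h3412 : ¬ ∃ j k l, j < k ∧ k < l ∧ v k < v l ∧ (v l).castSucc < c ∧ c ≤ (v j).castSucc)
    (i : Fin n) (hi : i.succ < c) : v i = i := by
  induction i using WellFoundedLT.induction with
  | ind i ih =>
  have below (p : Fin n) (hp : p < i) : v p = p := ih p hp ((succ_lt_succ_iff.2 hp).trans hi)
  by_contra hne
  obtain ⟨q, hq⟩ := v.surjective i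
  have hiq : i < q := by
    rcases lt_trichotomy q i with hqi | rfl | hiq
    · exact absurd (below q hqi ▸ hq) hqi.ne
    · exact absurd hq hne
    · exact hiq
  have hvi : i < v i := by
    refine lt_of_le_of_ne (not_lt.1 fun h ↦ ?_) (Ne.symm hne)
    exact h.ne (v.injective (below (v i) h))
  by_cases hvc : (v i).castSucc < c
  · exact h321 ⟨i, q, hiq, hq ▸ hvi, hvc⟩
  -- Now `v i ≥ c`, and the values `i` and `i + 1` both lie to the right of position `i`:
  -- with the first entry they form a 321 or a 3412.
  have hc : i.val + 1 < c.val := hi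
  have hcv : c.val ≤ (v i).val := by simpa [lt_def] using hvc
  obtain ⟨r, hr⟩ := v.surjective ⟨i + 1, by omega⟩
  replace hr : (v r).val = i.val + 1 := congrArg Fin.val hr
  have hir : i < r := by
    rcases lt_trichotomy r i with hri | rfl | hir
    · rw [below r hri] at hr
      simp only [lt_def] at hri; omega
    · omega
    · exact hir
  have hvr : (v r).castSucc < c := by simp only [lt_def, val_castSucc]; omega
  rcases lt_trichotomy q r with hqr | rfl | hrq
  · exact h3412 ⟨i, q, r, hiq, hqr, by simp only [lt_def, hq]; omega, hvr, not_lt.1 hvc⟩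
  · rw [hq] at hr; omega
  · exact h321 ⟨r, q, hrq, by simp only [lt_def, hq]; omega, hvr⟩

lemma avoids_consPerm_iff :
    Avoids321 (consPerm c v) ∧ Avoids3412 (consPerm c v) ↔
      (Avoids321 v ∧ Avoids3412 v) ∧ ∀ i : Fin n, i.succ < c → v i = i := by
  rw [avoids321_consPerm_iff, avoids3412_consPerm_iff]
  refine ⟨fun ⟨⟨h₁, h321⟩, h₂, h3412⟩ ↦ ⟨⟨h₁, h₂⟩, apply_eq_self_of_succ_lt h321 h3412⟩,
    fun ⟨⟨h₁, h₂⟩, hfix⟩ ↦ ⟨⟨h₁, ?_⟩, h₂, ?_⟩⟩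
  all_goals
    have fixed (p : Fin n) (hp : p.val + 1 < c) : (v p).val = p := congrArg val (hfix p hp)
    have fixed_value (p : Fin n) (hp : (v p).val + 1 < c) : (v p).val = p :=
      congrArg val (v.injective (hfix (v p) hp))
    simp only [lt_def, le_def, val_castSucc, not_exists, not_and]
  · intro j k hjk hkj hjc
    have := fixed_value k (by omega)
    have := fixed j (by omega)
    omega
  · intro j k l hjk hkl hkl' hlc hcj
    have := fixed_value k (by omega)
    have := fixed j (by omega)
    omega

end FirstEntryPatterns

end Fin

noncomputable def numAvoiders (n : ℕ) : ℕ :=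
  Nat.card {w : Perm (Fin n) // Avoids321 w ∧ Avoids3412 w}

noncomputable def numAvoidersFixing (n k : ℕ) : ℕ :=
  Nat.card {v : Perm (Fin n) // (Avoids321 v ∧ Avoids3412 v) ∧ ∀ i : Fin n, i.val < k → v i = i}

lemma numAvoidersFixing_zero (n : ℕ) : numAvoidersFixing n 0 = numAvoiders n :=
  Nat.card_congr (Equiv.subtypeEquivRight fun _ ↦ by simp)

lemma numAvoidersFixing_succ_succ (n k : ℕ) :
    numAvoidersFixing (n + 1) (k + 1) = numAvoidersFixing n k := by
  rw [numAvoidersFixing, Fin.natCard_subtype_eq_sum_consPerm, Finset.sum_eq_single 0]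
  · refine Nat.card_congr (Equiv.subtypeEquivRight fun v ↦ ?_)
    rw [Fin.avoids_consPerm_iff]
    simp [Fin.forall_fin_succ]
  · intro c _ hc
    rw [Nat.card_eq_zero]
    refine .inl ⟨fun ⟨v, _, hfix⟩ ↦ hc ?_⟩
    simpa using hfix 0 k.succ_pos
  · simp

lemma numAvoidersFixing_eq (n k : ℕ) (hk : k ≤ n) :
    numAvoidersFixing n k = numAvoiders (n - k) := by
  induction k generalizing n with
  | zero => exact numAvoidersFixing_zero n
  | succ k ih =>
    obtain ⟨n, rfl⟩ := Nat.exists_eq_add_of_lt hk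
    rw [numAvoidersFixing_succ_succ, ih _ (by omega)]
    congr 1; omega

lemma numAvoiders_zero : numAvoiders 0 = 1 := by
  simp [numAvoiders, Avoids321, Avoids3412]

lemma numAvoiders_succ (n : ℕ) :
    numAvoiders (n + 1) = numAvoiders n + ∑ k ∈ range n, numAvoiders (k + 1) := by
  rw [numAvoiders, Fin.natCard_subtype_eq_sum_consPerm, Fin.sum_univ_succ]
  congr 1
  · rw [← numAvoidersFixing_zero]
    refine Nat.card_congr (Equiv.subtypeEquivRight fun v ↦ ?_)
    simp [Fin.avoids_consPerm_iff]
  · calc ∑ k : Fin n, _ = ∑ k : Fin n, numAvoidersFixing n k := by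
          refine Fintype.sum_congr _ _ fun k ↦ Nat.card_congr (Equiv.subtypeEquivRight fun v ↦ ?_)
          simp [Fin.avoids_consPerm_iff]
      _ = ∑ k ∈ range n, numAvoiders (n - k) := by
          rw [Fin.sum_univ_eq_sum_range (fun k ↦ numAvoidersFixing n k)]
          exact sum_congr rfl fun k hk ↦ numAvoidersFixing_eq n k (by simp at hk; omega)
      _ = ∑ k ∈ range n, numAvoiders (k + 1) := by
          rw [← sum_range_reflect]
          exact sum_congr rfl fun k hk ↦ by simp at hk; congr 1; omega

lemma Nat.sum_range_fib_two_mul_add_one (n : ℕ) :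
    ∑ k ∈ range n, fib (2 * k + 1) = fib (2 * n) := by
  induction n with
  | zero => simp
  | succ n ih => rw [sum_range_succ, ih, Nat.mul_succ, Nat.fib_add_two]

lemma numAvoiders_succ_eq_fib (n : ℕ) : numAvoiders (n + 1) = Nat.fib (2 * n + 1) := by
  induction n using Nat.strong_induction_on with
  | _ n ih =>
  rw [numAvoiders_succ]
  rcases n with _ | n
  · simp [numAvoiders_zero]
  · rw [ih n n.lt_succ_self, sum_congr rfl fun k hk ↦ ih k (by simpa using hk),
      Nat.sum_range_fib_two_mul_add_one, show 2 * (n + 1) + 1 = 2 * n + 1 + 2 by ring,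
      Nat.fib_add_two, Nat.mul_succ]

/-- Fan's enumeration: the number of permutations in `S_n` avoiding both 321
and 3412 is the Fibonacci number `F_{2n-1}` (with `F_1 = F_2 = 1`). -/
theorem stmt9 (n : ℕ) (hn : 1 ≤ n) :
    Nat.card {w : Equiv.Perm (Fin n) // Avoids321 w ∧ Avoids3412 w} =
      Nat.fib (2 * n - 1) := by
  obtain ⟨n, rfl⟩ := Nat.exists_eq_add_of_le' hn
  rw [show 2 * (n + 1) - 1 = 2 * n + 1 by omega]
  exact numAvoiders_succ_eq_fib n
end

section
/- Let λ, μ be weakly increasing integer sequences of length m, and let {1,...,m} = I_λ ⊔ J_λ = I_μ ⊔ J_μ be partitions with |I_λ| = |I_μ| = k. Write I_λ = {i^λ_1 < ... < i^λ_k} etc. Given w_I ∈ S_k and w_J ∈ S_{m−k}, define w̃ ∈ S_m by w̃(i^λ_t) = i^μ_{w_I(t)} and w̃(j^λ_s) = j^μ_{w_J(s)}. If w_I ∈ Q(λ_I, μ_I) and w_J ∈ Q(λ_J, μ_J) (i.e., (λ_I)_t ≤ (μ_I)_{w_I(t)} + 1 for all t, and similarly for J), then w̃ ∈ Q(λ,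 μ), i.e., λ_i ≤ μ_{w̃(i)} + 1 for all i, and the multiset equality Σ_{t} [(λ_I)_t, (μ_I)_{w_I(t)}] + Σ_s [(λ_J)_s, (μ_J)_{w_J(s)}] = Σ_i [λ_i, μ_{w̃(i)}] holds. -/
/-!
Enumerating `I_λ ⊔ J_λ` and `I_μ ⊔ J_μ` gives two bijections `Fin k ⊕ Fin (m - k) ≃ Fin m`;
`w̃` is `w_I ⊕ w_J` transported along them. Every `i` is some `i^λ_t` or `j^λ_s`, so the
inequalities defining `Q` transfer pointwise, and reindexing the multiset over `Fin m` along the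
`λ`-bijection splits it into its `I`- and `J`-parts.
-/

open Function

section SumElim

variable {α β γ : Type*}

theorem Function.bijective_sumElim_of_range_compl {f : α → γ} {g : β → γ}
    (hf : Injective f) (hg : Injective g)
    (hfg : ∀ x, (∃ a, f a = x) ↔ ¬ ∃ b, g b = x) : Bijective (Sum.elim f g) := by
  refine ⟨hf.sumElim hg fun a b h => (hfg (g b)).mp ⟨a, h⟩ ⟨b, rfl⟩, fun x => ?_⟩
  by_cases hx : ∃ a, f a = x
  · obtain ⟨a, rfl⟩ := hx
    exact ⟨Sum.inl a, rfl⟩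
  · obtain ⟨b, rfl⟩ := not_not.mp (mt (hfg x).mpr hx)
    exact ⟨Sum.inr b, rfl⟩

theorem Equiv.Perm.exists_intertwining_sumCongr {f f' : α → γ} {g g' : β → γ}
    (hfg : Bijective (Sum.elim f g)) (hfg' : Bijective (Sum.elim f' g'))
    (σ : Equiv.Perm α) (τ : Equiv.Perm β) :
    ∃ w : Equiv.Perm γ, (∀ a, w (f a) = f' (σ a)) ∧ ∀ b, w (g b) = g' (τ b) := by
  let e := Equiv.ofBijective _ hfg
  let e' := Equiv.ofBijective _ hfg'
  refine ⟨e.symm.trans ((Equiv.sumCongr σ τ).trans e'), fun a => ?_, fun b => ?_⟩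
  · change e' (Sum.map σ τ (e.symm (e (Sum.inl a)))) = _
    rw [Equiv.symm_apply_apply]
    rfl
  · change e' (Sum.map σ τ (e.symm (e (Sum.inr b)))) = _
    rw [Equiv.symm_apply_apply]
    rfl

theorem Multiset.map_univ_add_map_univ_of_bijective_sumElim {X : Type*}
    [Fintype α] [Fintype β] [Fintype γ] {f : α → γ} {g : β → γ}
    (hfg : Bijective (Sum.elim f g)) (F : γ → X) :
    Finset.univ.val.map (fun a => F (f a)) + Finset.univ.val.map (fun b => F (g b)) =
      Finset.univ.val.map F := by
  rw [← (Multiset.bijective_iff_map_univ_eq_univ _).mp hfg, Multiset.map_map,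
    ← Finset.univ_disjSum_univ, Finset.val_disjSum, Multiset.disjSum, Multiset.map_add,
    Multiset.map_map, Multiset.map_map]
  rfl

end SumElim

theorem stmt15_general {m k : ℕ}
    (lam mu : Fin m → ℤ)
    (iLam : Fin k → Fin m) (jLam : Fin (m - k) → Fin m)
    (iMu : Fin k → Fin m) (jMu : Fin (m - k) → Fin m)
    (hiLam : StrictMono iLam) (hjLam : StrictMono jLam)
    (hiMu : StrictMono iMu) (hjMu : StrictMono jMu)
    (hcompLam : ∀ x : Fin m, (∃ t, iLam t = x) ↔ ¬ ∃ s, jLam s = x)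
    (hcompMu : ∀ x : Fin m, (∃ t, iMu t = x) ↔ ¬ ∃ s, jMu s = x)
    (wI : Equiv.Perm (Fin k)) (wJ : Equiv.Perm (Fin (m - k)))
    (hwI : ∀ t, lam (iLam t) ≤ mu (iMu (wI t)) + 1)
    (hwJ : ∀ s, lam (jLam s) ≤ mu (jMu (wJ s)) + 1) :
    ∃ wt : Equiv.Perm (Fin m),
      (∀ t, wt (iLam t) = iMu (wI t)) ∧
      (∀ s, wt (jLam s) = jMu (wJ s)) ∧
      (∀ i, lam i ≤ mu (wt i) + 1) ∧
      (Finset.univ.val.map (fun t : Fin k => (lam (iLam t), mu (iMu (wI t)))) +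
        Finset.univ.val.map (fun s : Fin (m - k) => (lam (jLam s), mu (jMu (wJ s)))) =
        Finset.univ.val.map (fun i : Fin m => (lam i, mu (wt i)))) := by
  have bijLam := bijective_sumElim_of_range_compl hiLam.injective hjLam.injective hcompLam
  have bijMu := bijective_sumElim_of_range_compl hiMu.injective hjMu.injective hcompMu
  obtain ⟨wt, hwtI, hwtJ⟩ := Equiv.Perm.exists_intertwining_sumCongr bijLam bijMu wI wJ
  refine ⟨wt, hwtI, hwtJ, ?_, ?_⟩
  · intro i
    obtain ⟨t | s, rfl⟩ := bijLam.surjective i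
    · simpa only [Sum.elim_inl, hwtI] using hwI t
    · simpa only [Sum.elim_inr, hwtJ] using hwJ s
  · rw [← Multiset.map_univ_add_map_univ_of_bijective_sumElim bijLam]
    simp only [hwtI, hwtJ]

/-- Section 3.3: compatibility of the `∗` operation. Given partitions
`{1,…,m} = I_λ ⊔ J_λ = I_μ ⊔ J_μ` with `|I_λ| = |I_μ| = k` (encoded by strictly
monotone enumerations with complementary ranges), and `w_I ∈ Q(λ_I, μ_I)`,
`w_J ∈ Q(λ_J, μ_J)`, there is a permutation `w̃ ∈ S_m` with
`w̃(i^λ_t) = i^μ_{w_I(t)}`, `w̃(j^λ_s) = j^μ_{w_J(s)}`, lying in `Q(λ,μ)`, and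
the two multisegments agree as multisets of (possibly trivial) segments. -/
theorem stmt15 {m k : ℕ} (hk : k ≤ m)
    (lam mu : Fin m → ℤ) (hlam : Monotone lam) (hmu : Monotone mu)
    (iLam : Fin k → Fin m) (jLam : Fin (m - k) → Fin m)
    (iMu : Fin k → Fin m) (jMu : Fin (m - k) → Fin m)
    (hiLam : StrictMono iLam) (hjLam : StrictMono jLam)
    (hiMu : StrictMono iMu) (hjMu : StrictMono jMu)
    (hcompLam : ∀ x : Fin m, (∃ t, iLam t = x) ↔ ¬ ∃ s, jLam s = x)
    (hcompMu : ∀ x : Fin m, (∃ t, iMu t = x) ↔ ¬ ∃ s, jMu s = x)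
    (wI : Equiv.Perm (Fin k)) (wJ : Equiv.Perm (Fin (m - k)))
    (hwI : ∀ t, lam (iLam t) ≤ mu (iMu (wI t)) + 1)
    (hwJ : ∀ s, lam (jLam s) ≤ mu (jMu (wJ s)) + 1) :
    ∃ wt : Equiv.Perm (Fin m),
      (∀ t, wt (iLam t) = iMu (wI t)) ∧
      (∀ s, wt (jLam s) = jMu (wJ s)) ∧
      (∀ i, lam i ≤ mu (wt i) + 1) ∧
      (Finset.univ.val.map (fun t : Fin k => (lam (iLam t), mu (iMu (wI t)))) +
        Finset.univ.val.map (fun s : Fin (m - k) => (lam (jLam s), mu (jMu (wJ s)))) =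
        Finset.univ.val.map (fun i : Fin m => (lam i, mu (wt i)))) :=
  stmt15_general lam mu iLam jLam iMu jMu hiLam hjLam hiMu hjMu hcompLam hcompMu wI wJ hwI hwJ
end

section
/- Let w ∈ S_n and k = w(1). Suppose w avoids 321. If there exists an index i_1 with 2 ≤ i_1 ≤ k−1 and w(i_1) > k, then there exist indices i_1 < i_2 < i_3 ≤ n with w(i_2) < w(i_3) < k, and consequently the indices 1 < i_1 < i_2 < i_3 form an occurrence of the pattern 3412 in w. -/
open Finset

namespace Equiv.Perm

variable {n : ℕ} (w : Perm (Fin n))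

lemma card_filter_apply_lt (v : Fin n) : #{j | w j < v} = v := by
  have : ({j | w j < v} : Finset (Fin n)) = (Iio v).map w.symm.toEmbedding := by
    ext j; simp
  rw [this, card_map, Fin.card_Iio]

lemma apply_lt_card_filter_add {z i : Fin n} (hzi : z < i) (hw : w z < w i) :
    (w z : ℕ) < #{j | w j < w z ∧ i < j} + i := by
  have hsub : ({j | w j < w z ∧ ¬ i < j} : Finset (Fin n)) ⊆ (Iio i).erase z := by
    intro j hj
    simp only [mem_filter, mem_univ, true_and, not_lt] at hj
    refine mem_erase.2 ⟨?_, mem_Iio.2 (hj.2.lt_of_ne ?_)⟩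
    · rintro rfl; exact hj.1.false
    · rintro rfl; exact hw.not_gt hj.1
  have hsplit := card_filter_add_card_filter_not (s := ({j | w j < w z} : Finset (Fin n))) (i < ·)
  have hfew := card_le_card hsub
  rw [card_erase_of_mem (mem_Iio.2 hzi), Fin.card_Iio] at hfew
  simp only [filter_filter, card_filter_apply_lt] at hsplit
  omega

end Equiv.Perm

theorem Avoids321.apply_lt_apply {n : ℕ} {w : Equiv.Perm (Fin n)} (h : Avoids321 w)
    {i a b : Fin n} (hia : i < a) (hab : a < b) (ha : w a < w i) : w a < w b :=
  (lt_or_gt_of_ne (w.injective.ne hab.ne)).resolve_right fun hba => h ⟨i, a, b, hia, hab, hba, ha⟩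

/-- The counting argument in the proof of Lemma 7.1 (zero-based): if `w` avoids
321, `i₁` satisfies `1 ≤ i₁` and `i₁ + 1 ≤ w(0)` (one-based: `2 ≤ i₁ ≤ k - 1`
with `k = w(1)`), and `w(i₁) > w(0)`, then there exist `i₁ < i₂ < i₃` with
`w(i₂) < w(i₃) < w(0)`; together with `w(0) < w(i₁)` the indices
`(0, i₁, i₂, i₃)` form an occurrence of the pattern 3412 in `w`. -/
theorem stmt19 {n : ℕ} (hn : 0 < n) (w : Equiv.Perm (Fin n)) (h321 : Avoids321 w)
    (i₁ : Fin n) (hi1 : 1 ≤ (i₁ : ℕ)) (hi2 : (i₁ : ℕ) + 1 ≤ (w ⟨0, hn⟩ : ℕ))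
    (hbig : w ⟨0, hn⟩ < w i₁) :
    ∃ i₂ i₃ : Fin n, i₁ < i₂ ∧ i₂ < i₃ ∧
      w i₂ < w i₃ ∧ w i₃ < w ⟨0, hn⟩ ∧ w ⟨0, hn⟩ < w i₁ := by
  have hzi : (⟨0, hn⟩ : Fin n) < i₁ := Fin.lt_def.2 hi1
  have hB : 1 < #({j | w j < w ⟨0, hn⟩ ∧ i₁ < j} : Finset (Fin n)) := by
    have := w.apply_lt_card_filter_add hzi hbig
    omega
  have hne := card_pos.1 (zero_lt_one.trans hB)
  obtain ⟨hmin_val, hmin_pos⟩ := (mem_filter.1 (min'_mem _ hne)).2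
  obtain ⟨hmax_val, -⟩ := (mem_filter.1 (max'_mem _ hne)).2
  have hlt := min'_lt_max'_of_card _ hB
  exact ⟨_, _, hmin_pos, hlt, h321.apply_lt_apply (hzi.trans hmin_pos) hlt hmin_val, hmax_val, hbig⟩
end
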